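/- If a dagger category C has dagger equalizers, dagger pullbacks, and binary dagger products, then C is indiscrete: every hom-set C(A, B) contains exactly one morphism. -/
import Mathlib


open CategoryTheory

universe v u v₁ u₁ v₂ u₂

class DaggerCategory (C : Type u) [Category.{v} C] where
  dag : ∀ {A B : C}, (A ⟶ B) → (B ⟶ A)
  dag_id : ∀ (A : C), dag (𝟙 A) = 𝟙 A
  dag_comp : ∀ {A B X : C} (f : A ⟶ B) (g : B ⟶ X), dag (f ≫ g) = dag g ≫ dag f
  dag_dag : ∀ {A B : C} (f : A ⟶ B), dag (dag f) = f

postfix:max "†" => DaggerCategory.dag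

section Defs

variable {C : Type u} [Category.{v} C] [DaggerCategory C]

/-- A morphism `f` is a partial isometry if `f ∘ f† ∘ f = f`. -/
def IsPartialIsometry {A B : C} (f : A ⟶ B) : Prop :=
  f ≫ f† ≫ f = f

/-- A morphism `f : A ⟶ B` is unitary if `f† ∘ f = 𝟙 A` and `f ∘ f† = 𝟙 B`. -/
def IsUnitary {A B : C} (f : A ⟶ B) : Prop :=
  f ≫ f† = 𝟙 A ∧ f† ≫ f = 𝟙 B

/-- A morphism `f` is dagger monic (an isometry) if `f† ∘ f = 𝟙`. -/
def DaggerMonic {A B : C} (f : A ⟶ B) : Prop :=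
  f ≫ f† = 𝟙 A

/-- `(L, l)` is a limit cone over the diagram `D`. -/
def IsLimitCone {J : Type u₁} [Category.{v₁} J] (D : J ⥤ C) (L : C)
    (l : ∀ j : J, L ⟶ D.obj j) : Prop :=
  (∀ {j j' : J} (f : j ⟶ j'), l j ≫ D.map f = l j') ∧
  (∀ (M : C) (m : ∀ j : J, M ⟶ D.obj j),
    (∀ {j j' : J} (f : j ⟶ j'), m j ≫ D.map f = m j') →
    ∃! g : M ⟶ L, ∀ j : J, g ≫ l j = m j)

/-- A class of objects `Ω` is weakly initial when every object admits a morphism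
from some member of `Ω`. -/
def WeaklyInitial {J : Type u₁} [Category.{v₁} J] (Ω : Set J) : Prop :=
  ∀ B : J, ∃ A ∈ Ω, Nonempty (A ⟶ B)

/-- `(L, l)` is a dagger limit of `(D, Ω)`: a limit cone whose legs at `Ω` are
partial isometries with pairwise commuting induced projections. -/
def IsDaggerLimit {J : Type u₁} [Category.{v₁} J] (D : J ⥤ C) (Ω : Set J) (L : C)
    (l : ∀ j : J, L ⟶ D.obj j) : Prop :=
  IsLimitCone D L l ∧
  (∀ j ∈ Ω, IsPartialIsometry (l j)) ∧
  (∀ j ∈ Ω, ∀ j' ∈ Ω,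
    (l j ≫ (l j)†) ≫ (l j' ≫ (l j')†) = (l j' ≫ (l j')†) ≫ (l j ≫ (l j)†))

end Defs

section MoreDefs

variable {C : Type u} [Category.{v} C] [DaggerCategory C]

/-- `e : E ⟶ A` is an equalizer of the parallel pair `f, g : A ⟶ B`. -/
def IsEqualizer {E A B : C} (e : E ⟶ A) (f g : A ⟶ B) : Prop :=
  e ≫ f = e ≫ g ∧
  ∀ {X : C} (h : X ⟶ A), h ≫ f = h ≫ g → ∃! k : X ⟶ E, k ≫ e = h

/-- `C` has dagger equalizers: every parallel pair has an equalizer that is dagger monic. -/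
def HasDaggerEqualizers (C : Type u) [Category.{v} C] [DaggerCategory C] : Prop :=
  ∀ {A B : C} (f g : A ⟶ B), ∃ (E : C) (e : E ⟶ A), IsEqualizer e f g ∧ DaggerMonic e

/-- `(P, p, q)` is a dagger pullback of the cospan `f : A ⟶ X`, `g : B ⟶ X`: a pullback whose
legs to the feet are partial isometries with commuting induced projections. -/
def IsDaggerPullback {P A B X : C} (p : P ⟶ A) (q : P ⟶ B) (f : A ⟶ X) (g : B ⟶ X) : Prop :=
  p ≫ f = q ≫ g ∧
  (∀ {Y : C} (a : Y ⟶ A) (b : Y ⟶ B), a ≫ f = b ≫ g →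
    ∃! k : Y ⟶ P, k ≫ p = a ∧ k ≫ q = b) ∧
  IsPartialIsometry p ∧ IsPartialIsometry q ∧
  (p ≫ p†) ≫ (q ≫ q†) = (q ≫ q†) ≫ (p ≫ p†)

/-- `C` has dagger pullbacks. -/
def HasDaggerPullbacks (C : Type u) [Category.{v} C] [DaggerCategory C] : Prop :=
  ∀ {A B X : C} (f : A ⟶ X) (g : B ⟶ X),
    ∃ (P : C) (p : P ⟶ A) (q : P ⟶ B), IsDaggerPullback p q f g

/-- `(P, p)` is a dagger product of the family `A`: a product whose projections are partial
isometries with pairwise commuting induced projections. -/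
def IsDaggerProduct {ι : Type u₁} (A : ι → C) (P : C) (p : ∀ i, P ⟶ A i) : Prop :=
  (∀ {Y : C} (a : ∀ i, Y ⟶ A i), ∃! k : Y ⟶ P, ∀ i, k ≫ p i = a i) ∧
  (∀ i, IsPartialIsometry (p i)) ∧
  (∀ i i', (p i ≫ (p i)†) ≫ (p i' ≫ (p i')†) = (p i' ≫ (p i')†) ≫ (p i ≫ (p i)†))

end MoreDefs

section
variable {C : Type u} [Category.{v} C] [DaggerCategory C]

/-- `(P, p, q)` is a binary dagger product of `A` and `B`: a product whose projections are
partial isometries with commuting induced projections (the dagger limit of the two-object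
discrete diagram, `Ω` consisting of both objects). -/
def IsBinaryDaggerProduct {P A B : C} (p : P ⟶ A) (q : P ⟶ B) : Prop :=
  (∀ {Y : C} (a : Y ⟶ A) (b : Y ⟶ B), ∃! k : Y ⟶ P, k ≫ p = a ∧ k ≫ q = b) ∧
  IsPartialIsometry p ∧ IsPartialIsometry q ∧
  (p ≫ p†) ≫ (q ≫ q†) = (q ≫ q†) ≫ (p ≫ p†)

end


section AuxIndiscrete

variable {C : Type u} [Category.{v} C] [DaggerCategory C]

/-- A split epi that is a partial isometry is a coisometry. -/
private lemma coiso_of_split {P X : C} {r : P ⟶ X} (hpi : r ≫ r† ≫ r = r)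
    {d : X ⟶ P} (hd : d ≫ r = 𝟙 X) : r† ≫ r = 𝟙 X := by
  calc r† ≫ r = (d ≫ r) ≫ r† ≫ r := by rw [hd, Category.id_comp]
  _ = d ≫ (r ≫ r† ≫ r) := by simp only [Category.assoc]
  _ = d ≫ r := by rw [hpi]
  _ = 𝟙 X := hd

/-- A split mono that is a partial isometry is an isometry. -/
private lemma iso_of_split {X P : C} {k : X ⟶ P} (hpi : k ≫ k† ≫ k = k)
    {x : P ⟶ X} (hx : k ≫ x = 𝟙 X) : k ≫ k† = 𝟙 X := by
  calc k ≫ k† = (k ≫ k†) ≫ (k ≫ x) := by rw [hx, Category.comp_id]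
  _ = (k ≫ k† ≫ k) ≫ x := by simp only [Category.assoc]
  _ = k ≫ x := by rw [hpi]
  _ = 𝟙 X := hx

/-- Dagger pullbacks along the identity force every morphism to be a partial isometry. -/
private lemma pi_all (hpb : HasDaggerPullbacks C) {X Y : C} (f : X ⟶ Y) :
    f ≫ f† ≫ f = f := by
  obtain ⟨P, r, s, hcone, hup, hpir, hpis, -⟩ := hpb f (𝟙 Y)
  have hs : s = r ≫ f := by simpa using hcone.symm
  obtain ⟨d, hd, -⟩ := hup (𝟙 X) f (by simp)
  have hd1 : d ≫ r = 𝟙 X := hd.1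
  have hrr : r† ≫ r = 𝟙 X := coiso_of_split hpir hd1
  have h2 : r ≫ f ≫ f† ≫ f = r ≫ f := by
    have h : (r ≫ f) ≫ ((r ≫ f)†) ≫ (r ≫ f) = r ≫ f := by rw [← hs]; exact hpis
    simp only [DaggerCategory.dag_comp, Category.assoc] at h
    rw [show r† ≫ r ≫ f = f by rw [← Category.assoc, hrr, Category.id_comp]] at h
    exact h
  calc f ≫ f† ≫ f = (d ≫ r) ≫ f ≫ f† ≫ f := by rw [hd1, Category.id_comp]
  _ = d ≫ (r ≫ f ≫ f† ≫ f) := by simp only [Category.assoc]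
  _ = d ≫ (r ≫ f) := by rw [h2]
  _ = (d ≫ r) ≫ f := by simp only [Category.assoc]
  _ = f := by rw [hd1, Category.id_comp]

private lemma bp_coiso₁ {P X Y : C} {p : P ⟶ X} {q : P ⟶ Y}
    (h : IsBinaryDaggerProduct p q) : p† ≫ p = 𝟙 X := by
  obtain ⟨k, ⟨hk1, -⟩, -⟩ := h.1 (𝟙 X) (p† ≫ q)
  exact coiso_of_split h.2.1 hk1

private lemma bp_coiso₂ {P X Y : C} {p : P ⟶ X} {q : P ⟶ Y}
    (h : IsBinaryDaggerProduct p q) : q† ≫ q = 𝟙 Y := by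
  obtain ⟨k, ⟨-, hk2⟩, -⟩ := h.1 (q† ≫ p) (𝟙 Y)
  exact coiso_of_split h.2.2.1 hk2

/-- Consequence of the commutation condition for binary dagger products. -/
private lemma bp_const {P X Y : C} {p : P ⟶ X} {q : P ⟶ Y}
    (h : IsBinaryDaggerProduct p q) {V : C} (a : V ⟶ X) (b : V ⟶ Y) :
    a ≫ p† ≫ q = b ≫ q† ≫ p ≫ p† ≫ q := by
  have hII : p ≫ p† ≫ q = q ≫ q† ≫ p ≫ p† ≫ q := by
    have h1 : ((p ≫ p†) ≫ q ≫ q†) ≫ q = ((q ≫ q†) ≫ p ≫ p†) ≫ q := by rw [h.2.2.2]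
    simp only [Category.assoc] at h1
    rw [bp_coiso₂ h] at h1
    simpa using h1
  obtain ⟨k, ⟨hk1, hk2⟩, -⟩ := h.1 a b
  calc a ≫ p† ≫ q = (k ≫ p) ≫ p† ≫ q := by rw [hk1]
  _ = k ≫ (p ≫ p† ≫ q) := by simp only [Category.assoc]
  _ = k ≫ (q ≫ q† ≫ p ≫ p† ≫ q) := by conv_lhs => rw [hII]
  _ = (k ≫ q) ≫ q† ≫ p ≫ p† ≫ q := by simp only [Category.assoc]
  _ = b ≫ q† ≫ p ≫ p† ≫ q := by rw [hk2]

variable (hprod : ∀ A B : C, ∃ (P : C) (p : P ⟶ A) (q : P ⟶ B), IsBinaryDaggerProduct p q)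

include hprod in
/-- Existence of a zero object: an object all of whose incoming hom-sets are singletons. -/
private lemma exists_zero (heq : HasDaggerEqualizers C) (A : C) :
    ∃ Z : C, ∀ Y₀ : C, ∃ z : Y₀ ⟶ Z, ∀ z' : Y₀ ⟶ Z, z' = z := by
  obtain ⟨PA, p, q, hA⟩ := hprod A A
  have const : ∀ {V : C} (a b : V ⟶ A), a ≫ p† ≫ q = b ≫ p† ≫ q := by
    intro V a b
    exact (bp_const hA a b).trans (bp_const hA b b).symm
  have uu : (p† ≫ q) ≫ p† ≫ q = p† ≫ q := by have h := const (p† ≫ q) (𝟙 A); simpa using h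
  obtain ⟨E, e, ⟨he1, heup⟩, hdm⟩ := heq (p† ≫ q) (𝟙 A)
  have heu : e ≫ (p† ≫ q) = e := by simpa using he1
  have emono : ∀ {W : C} (m m' : W ⟶ E), m ≫ e = m' ≫ e → m = m' := by
    intro W m m' hme
    calc m = m ≫ 𝟙 E := by rw [Category.comp_id]
    _ = m ≫ e ≫ e† := by rw [hdm]
    _ = (m ≫ e) ≫ e† := by simp only [Category.assoc]
    _ = (m' ≫ e) ≫ e† := by rw [hme]
    _ = m' ≫ e ≫ e† := by simp only [Category.assoc]
    _ = m' := by rw [hdm, Category.comp_id]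
  obtain ⟨k, hk, -⟩ := heup (p† ≫ q) (by simpa using uu)
  have hzk : ∀ z : E ⟶ A, z ≫ k = 𝟙 E := by
    intro z
    apply emono
    have hz : z ≫ (p† ≫ q) = e := (const z e).trans heu
    calc (z ≫ k) ≫ e = z ≫ (k ≫ e) := by simp only [Category.assoc]
    _ = z ≫ (p† ≫ q) := by rw [hk]
    _ = e := hz
    _ = 𝟙 E ≫ e := by rw [Category.id_comp]
  have endE : ∀ w : E ⟶ E, w = 𝟙 E := by
    intro w
    calc w = w ≫ 𝟙 E := by rw [Category.comp_id]
    _ = w ≫ (e ≫ k) := by rw [hzk e]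
    _ = (w ≫ e) ≫ k := by simp only [Category.assoc]
    _ = 𝟙 E := hzk (w ≫ e)
  refine ⟨E, fun Y₀ => ?_⟩
  obtain ⟨PY, p', q', hY⟩ := hprod Y₀ E
  refine ⟨p'† ≫ q', fun b => ?_⟩
  have h := bp_const hY (𝟙 Y₀) b
  rw [endE (q'† ≫ p' ≫ p'† ≫ q')] at h
  simpa using h.symm

private noncomputable def PObj (X Y : C) : C := (hprod X Y).choose

private noncomputable def Pfst (X Y : C) : PObj hprod X Y ⟶ X :=
  (hprod X Y).choose_spec.choose

private noncomputable def Psnd (X Y : C) : PObj hprod X Y ⟶ Y :=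
  (hprod X Y).choose_spec.choose_spec.choose

private lemma Pprop (X Y : C) : IsBinaryDaggerProduct (Pfst hprod X Y) (Psnd hprod X Y) :=
  (hprod X Y).choose_spec.choose_spec.choose_spec

private noncomputable def pr {X Y V : C} (a : V ⟶ X) (b : V ⟶ Y) : V ⟶ PObj hprod X Y :=
  ((Pprop hprod X Y).1 a b).exists.choose

private lemma pr_fst {X Y V : C} (a : V ⟶ X) (b : V ⟶ Y) :
    pr hprod a b ≫ Pfst hprod X Y = a :=
  ((Pprop hprod X Y).1 a b).exists.choose_spec.1

private lemma pr_snd {X Y V : C} (a : V ⟶ X) (b : V ⟶ Y) :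
    pr hprod a b ≫ Psnd hprod X Y = b :=
  ((Pprop hprod X Y).1 a b).exists.choose_spec.2

private lemma pr_eq {X Y V : C} {a : V ⟶ X} {b : V ⟶ Y} {k : V ⟶ PObj hprod X Y}
    (h1 : k ≫ Pfst hprod X Y = a) (h2 : k ≫ Psnd hprod X Y = b) :
    k = pr hprod a b := by
  obtain ⟨w, -, hu⟩ := (Pprop hprod X Y).1 a b
  rw [hu k ⟨h1, h2⟩, hu (pr hprod a b) ⟨pr_fst hprod a b, pr_snd hprod a b⟩]

variable (Z : C) (hZ : ∀ Y₀ : C, ∃ z : Y₀ ⟶ Z, ∀ z' : Y₀ ⟶ Z, z' = z)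

private noncomputable def zm (Y₀ : C) : Y₀ ⟶ Z := (hZ Y₀).choose

private lemma zm_eq {Y₀ : C} (z : Y₀ ⟶ Z) : z = zm Z hZ Y₀ := (hZ Y₀).choose_spec z

include hZ in
private lemma zm_from {Y₀ : C} (v v' : Z ⟶ Y₀) : v = v' := by
  have h : v† = v'† := (zm_eq Z hZ v†).trans (zm_eq Z hZ v'†).symm
  calc v = (v†)† := by rw [DaggerCategory.dag_dag]
  _ = (v'†)† := by rw [h]
  _ = v' := by rw [DaggerCategory.dag_dag]

private noncomputable def zer (X Y : C) : X ⟶ Y := zm Z hZ X ≫ (zm Z hZ Y)†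

private lemma zer_pre {X' X Y : C} (c : X' ⟶ X) : c ≫ zer Z hZ X Y = zer Z hZ X' Y := by
  show c ≫ (zm Z hZ X ≫ (zm Z hZ Y)†) = zm Z hZ X' ≫ (zm Z hZ Y)†
  rw [← Category.assoc, show c ≫ zm Z hZ X = zm Z hZ X' from zm_eq Z hZ _]

private lemma zer_post {X Y Y' : C} (c : Y ⟶ Y') : zer Z hZ X Y ≫ c = zer Z hZ X Y' := by
  show (zm Z hZ X ≫ (zm Z hZ Y)†) ≫ c = zm Z hZ X ≫ (zm Z hZ Y')†
  rw [Category.assoc, zm_from Z hZ ((zm Z hZ Y)† ≫ c) ((zm Z hZ Y')†)]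

private lemma u_zer (X Y : C) :
    (Pfst hprod X Y)† ≫ Psnd hprod X Y = zer Z hZ X Y := by
  have h := bp_const (Pprop hprod X Y) (𝟙 X) (zer Z hZ X Y)
  rw [zer_post Z hZ
    ((Psnd hprod X Y)† ≫ Pfst hprod X Y ≫ (Pfst hprod X Y)† ≫ Psnd hprod X Y)] at h
  simpa using h

private lemma u_zer' (X Y : C) :
    (Psnd hprod X Y)† ≫ Pfst hprod X Y = zer Z hZ Y X := by
  have h := congrArg (fun x => x†) (u_zer hprod Z hZ X Y)
  simp only [DaggerCategory.dag_comp, DaggerCategory.dag_dag] at h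
  rw [show (zer Z hZ X Y)† = zer Z hZ Y X by
    show (zm Z hZ X ≫ (zm Z hZ Y)†)† = zm Z hZ Y ≫ (zm Z hZ X)†
    simp only [DaggerCategory.dag_comp, DaggerCategory.dag_dag]] at h
  exact h

/-- Formal sum induced by the binary dagger product structure. -/
private noncomputable def madd {V W : C} (f g : V ⟶ W) : V ⟶ W :=
  pr hprod f g ≫ (pr hprod (𝟙 W) (𝟙 W))†


include Z hZ in
private lemma ip {X Y V V' : C} (a : V ⟶ X) (b : V ⟶ Y) (c : V' ⟶ X) (d : V' ⟶ Y) :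
    pr hprod a b ≫ (pr hprod c d)† = madd hprod (a ≫ c†) (b ≫ d†) := by
  have c1 : (Pfst hprod X Y)† ≫ Pfst hprod X Y = 𝟙 X := bp_coiso₁ (Pprop hprod X Y)
  have c2 : (Psnd hprod X Y)† ≫ Psnd hprod X Y = 𝟙 Y := bp_coiso₂ (Pprop hprod X Y)
  have c1' : (Pfst hprod V' V')† ≫ Pfst hprod V' V' = 𝟙 V' := bp_coiso₁ (Pprop hprod V' V')
  have c2' : (Psnd hprod V' V')† ≫ Psnd hprod V' V' = 𝟙 V' := bp_coiso₂ (Pprop hprod V' V')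
  have z1 : (Pfst hprod X Y)† ≫ Psnd hprod X Y = zer Z hZ X Y := u_zer hprod Z hZ X Y
  have z2 : (Psnd hprod X Y)† ≫ Pfst hprod X Y = zer Z hZ Y X := u_zer' hprod Z hZ X Y
  have z1' : (Pfst hprod V' V')† ≫ Psnd hprod V' V' = zer Z hZ V' V' := u_zer hprod Z hZ V' V'
  have z2' : (Psnd hprod V' V')† ≫ Pfst hprod V' V' = zer Z hZ V' V' := u_zer' hprod Z hZ V' V'
  have hpW : (Pfst hprod X Y)† ≫ pr hprod (Pfst hprod X Y ≫ c†) (Psnd hprod X Y ≫ d†) = c† ≫ (Pfst hprod V' V')† := by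
    have e1 : (Pfst hprod X Y)† ≫ pr hprod (Pfst hprod X Y ≫ c†) (Psnd hprod X Y ≫ d†) = pr hprod c† (zer Z hZ X V') := by
      apply pr_eq
      · calc ((Pfst hprod X Y)† ≫ pr hprod (Pfst hprod X Y ≫ c†) (Psnd hprod X Y ≫ d†)) ≫ Pfst hprod V' V'
            = (Pfst hprod X Y)† ≫ (pr hprod (Pfst hprod X Y ≫ c†) (Psnd hprod X Y ≫ d†) ≫ Pfst hprod V' V') := by simp only [Category.assoc]
        _ = (Pfst hprod X Y)† ≫ (Pfst hprod X Y ≫ c†) := by rw [pr_fst]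
        _ = ((Pfst hprod X Y)† ≫ Pfst hprod X Y) ≫ c† := by simp only [Category.assoc]
        _ = c† := by rw [c1, Category.id_comp]
      · calc ((Pfst hprod X Y)† ≫ pr hprod (Pfst hprod X Y ≫ c†) (Psnd hprod X Y ≫ d†)) ≫ Psnd hprod V' V'
            = (Pfst hprod X Y)† ≫ (pr hprod (Pfst hprod X Y ≫ c†) (Psnd hprod X Y ≫ d†) ≫ Psnd hprod V' V') := by simp only [Category.assoc]
        _ = (Pfst hprod X Y)† ≫ (Psnd hprod X Y ≫ d†) := by rw [pr_snd]
        _ = ((Pfst hprod X Y)† ≫ Psnd hprod X Y) ≫ d† := by simp only [Category.assoc]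
        _ = zer Z hZ X Y ≫ d† := by rw [z1]
        _ = zer Z hZ X V' := zer_post Z hZ d†
    have e2 : c† ≫ (Pfst hprod V' V')† = pr hprod c† (zer Z hZ X V') := by
      apply pr_eq
      · calc (c† ≫ (Pfst hprod V' V')†) ≫ Pfst hprod V' V' = c† ≫ ((Pfst hprod V' V')† ≫ Pfst hprod V' V') := by simp only [Category.assoc]
        _ = c† := by rw [c1', Category.comp_id]
      · calc (c† ≫ (Pfst hprod V' V')†) ≫ Psnd hprod V' V' = c† ≫ ((Pfst hprod V' V')† ≫ Psnd hprod V' V') := by simp only [Category.assoc]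
        _ = c† ≫ zer Z hZ V' V' := by rw [z1']
        _ = zer Z hZ X V' := zer_pre Z hZ c†
    exact e1.trans e2.symm
  have hqW : (Psnd hprod X Y)† ≫ pr hprod (Pfst hprod X Y ≫ c†) (Psnd hprod X Y ≫ d†) = d† ≫ (Psnd hprod V' V')† := by
    have e1 : (Psnd hprod X Y)† ≫ pr hprod (Pfst hprod X Y ≫ c†) (Psnd hprod X Y ≫ d†) = pr hprod (zer Z hZ Y V') d† := by
      apply pr_eq
      · calc ((Psnd hprod X Y)† ≫ pr hprod (Pfst hprod X Y ≫ c†) (Psnd hprod X Y ≫ d†)) ≫ Pfst hprod V' V'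
            = (Psnd hprod X Y)† ≫ (pr hprod (Pfst hprod X Y ≫ c†) (Psnd hprod X Y ≫ d†) ≫ Pfst hprod V' V') := by simp only [Category.assoc]
        _ = (Psnd hprod X Y)† ≫ (Pfst hprod X Y ≫ c†) := by rw [pr_fst]
        _ = ((Psnd hprod X Y)† ≫ Pfst hprod X Y) ≫ c† := by simp only [Category.assoc]
        _ = zer Z hZ Y X ≫ c† := by rw [z2]
        _ = zer Z hZ Y V' := zer_post Z hZ c†
      · calc ((Psnd hprod X Y)† ≫ pr hprod (Pfst hprod X Y ≫ c†) (Psnd hprod X Y ≫ d†)) ≫ Psnd hprod V' V'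
            = (Psnd hprod X Y)† ≫ (pr hprod (Pfst hprod X Y ≫ c†) (Psnd hprod X Y ≫ d†) ≫ Psnd hprod V' V') := by simp only [Category.assoc]
        _ = (Psnd hprod X Y)† ≫ (Psnd hprod X Y ≫ d†) := by rw [pr_snd]
        _ = ((Psnd hprod X Y)† ≫ Psnd hprod X Y) ≫ d† := by simp only [Category.assoc]
        _ = d† := by rw [c2, Category.id_comp]
    have e2 : d† ≫ (Psnd hprod V' V')† = pr hprod (zer Z hZ Y V') d† := by
      apply pr_eq
      · calc (d† ≫ (Psnd hprod V' V')†) ≫ Pfst hprod V' V' = d† ≫ ((Psnd hprod V' V')† ≫ Pfst hprod V' V') := by simp only [Category.assoc]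
        _ = d† ≫ zer Z hZ V' V' := by rw [z2']
        _ = zer Z hZ Y V' := zer_pre Z hZ d†
      · calc (d† ≫ (Psnd hprod V' V')†) ≫ Psnd hprod V' V' = d† ≫ ((Psnd hprod V' V')† ≫ Psnd hprod V' V') := by simp only [Category.assoc]
        _ = d† := by rw [c2', Category.comp_id]
    exact e1.trans e2.symm
  have hWp : (pr hprod (Pfst hprod X Y ≫ c†) (Psnd hprod X Y ≫ d†))† ≫ Pfst hprod X Y = Pfst hprod V' V' ≫ c := by
    have h := congrArg (fun x => x†) hpW
    simp only [DaggerCategory.dag_comp, DaggerCategory.dag_dag] at h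
    exact h
  have hWq : (pr hprod (Pfst hprod X Y ≫ c†) (Psnd hprod X Y ≫ d†))† ≫ Psnd hprod X Y = Psnd hprod V' V' ≫ d := by
    have h := congrArg (fun x => x†) hqW
    simp only [DaggerCategory.dag_comp, DaggerCategory.dag_dag] at h
    exact h
  have hpair : pr hprod (𝟙 V') (𝟙 V') ≫ (pr hprod (Pfst hprod X Y ≫ c†) (Psnd hprod X Y ≫ d†))† = pr hprod c d := by
    apply pr_eq
    · calc (pr hprod (𝟙 V') (𝟙 V') ≫ (pr hprod (Pfst hprod X Y ≫ c†) (Psnd hprod X Y ≫ d†))†) ≫ Pfst hprod X Y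
          = pr hprod (𝟙 V') (𝟙 V') ≫ ((pr hprod (Pfst hprod X Y ≫ c†) (Psnd hprod X Y ≫ d†))† ≫ Pfst hprod X Y) := by simp only [Category.assoc]
      _ = pr hprod (𝟙 V') (𝟙 V') ≫ (Pfst hprod V' V' ≫ c) := by rw [hWp]
      _ = (pr hprod (𝟙 V') (𝟙 V') ≫ Pfst hprod V' V') ≫ c := by simp only [Category.assoc]
      _ = c := by rw [pr_fst, Category.id_comp]
    · calc (pr hprod (𝟙 V') (𝟙 V') ≫ (pr hprod (Pfst hprod X Y ≫ c†) (Psnd hprod X Y ≫ d†))†) ≫ Psnd hprod X Y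
          = pr hprod (𝟙 V') (𝟙 V') ≫ ((pr hprod (Pfst hprod X Y ≫ c†) (Psnd hprod X Y ≫ d†))† ≫ Psnd hprod X Y) := by simp only [Category.assoc]
      _ = pr hprod (𝟙 V') (𝟙 V') ≫ (Psnd hprod V' V' ≫ d) := by rw [hWq]
      _ = (pr hprod (𝟙 V') (𝟙 V') ≫ Psnd hprod V' V') ≫ d := by simp only [Category.assoc]
      _ = d := by rw [pr_snd, Category.id_comp]
  have hdag : (pr hprod c d)† = pr hprod (Pfst hprod X Y ≫ c†) (Psnd hprod X Y ≫ d†) ≫ (pr hprod (𝟙 V') (𝟙 V'))† := by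
    rw [← hpair]
    simp only [DaggerCategory.dag_comp, DaggerCategory.dag_dag]
  have hABW : pr hprod a b ≫ pr hprod (Pfst hprod X Y ≫ c†) (Psnd hprod X Y ≫ d†) = pr hprod (a ≫ c†) (b ≫ d†) := by
    apply pr_eq
    · calc (pr hprod a b ≫ pr hprod (Pfst hprod X Y ≫ c†) (Psnd hprod X Y ≫ d†)) ≫ Pfst hprod V' V'
          = pr hprod a b ≫ (pr hprod (Pfst hprod X Y ≫ c†) (Psnd hprod X Y ≫ d†) ≫ Pfst hprod V' V') := by simp only [Category.assoc]
      _ = pr hprod a b ≫ (Pfst hprod X Y ≫ c†) := by rw [pr_fst]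
      _ = (pr hprod a b ≫ Pfst hprod X Y) ≫ c† := by simp only [Category.assoc]
      _ = a ≫ c† := by rw [pr_fst]
    · calc (pr hprod a b ≫ pr hprod (Pfst hprod X Y ≫ c†) (Psnd hprod X Y ≫ d†)) ≫ Psnd hprod V' V'
          = pr hprod a b ≫ (pr hprod (Pfst hprod X Y ≫ c†) (Psnd hprod X Y ≫ d†) ≫ Psnd hprod V' V') := by simp only [Category.assoc]
      _ = pr hprod a b ≫ (Psnd hprod X Y ≫ d†) := by rw [pr_snd]
      _ = (pr hprod a b ≫ Psnd hprod X Y) ≫ d† := by simp only [Category.assoc]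
      _ = b ≫ d† := by rw [pr_snd]
  calc pr hprod a b ≫ (pr hprod c d)†
      = pr hprod a b ≫ (pr hprod (Pfst hprod X Y ≫ c†) (Psnd hprod X Y ≫ d†) ≫ (pr hprod (𝟙 V') (𝟙 V'))†) := by rw [hdag]
  _ = (pr hprod a b ≫ pr hprod (Pfst hprod X Y ≫ c†) (Psnd hprod X Y ≫ d†)) ≫ (pr hprod (𝟙 V') (𝟙 V'))† := by simp only [Category.assoc]
  _ = pr hprod (a ≫ c†) (b ≫ d†) ≫ (pr hprod (𝟙 V') (𝟙 V'))† := by rw [hABW]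

private lemma madd_idem (hpb : HasDaggerPullbacks C) {V W : C} (f : V ⟶ W) :
    madd hprod f f = f := by
  have h1 : f ≫ pr hprod (𝟙 W) (𝟙 W) = pr hprod f f :=
    pr_eq hprod (by rw [Category.assoc, pr_fst, Category.comp_id])
      (by rw [Category.assoc, pr_snd, Category.comp_id])
  have h2 : pr hprod (𝟙 W) (𝟙 W) ≫ (pr hprod (𝟙 W) (𝟙 W))† = 𝟙 W :=
    iso_of_split (pi_all hpb _) (pr_fst hprod (𝟙 W) (𝟙 W))
  calc madd hprod f f = pr hprod f f ≫ (pr hprod (𝟙 W) (𝟙 W))† := rfl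
  _ = (f ≫ pr hprod (𝟙 W) (𝟙 W)) ≫ (pr hprod (𝟙 W) (𝟙 W))† := by rw [h1]
  _ = f ≫ (pr hprod (𝟙 W) (𝟙 W) ≫ (pr hprod (𝟙 W) (𝟙 W))†) := by simp only [Category.assoc]
  _ = f := by rw [h2, Category.comp_id]

include Z hZ in
private lemma madd_post {V W W' : C} (f g : V ⟶ W) (c : W ⟶ W') :
    madd hprod f g ≫ c = madd hprod (f ≫ c) (g ≫ c) := by
  have h1 : c† ≫ pr hprod (𝟙 W) (𝟙 W) = pr hprod c† c† :=
    pr_eq hprod (by rw [Category.assoc, pr_fst, Category.comp_id])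
      (by rw [Category.assoc, pr_snd, Category.comp_id])
  have h2 : (pr hprod (𝟙 W) (𝟙 W))† ≫ c = (pr hprod c† c†)† := by
    have h := congrArg (fun x => x†) h1
    simp only [DaggerCategory.dag_comp, DaggerCategory.dag_dag] at h
    exact h
  have h3 : pr hprod f g ≫ (pr hprod c† c†)† = madd hprod (f ≫ c††) (g ≫ c††) :=
    ip hprod Z hZ f g c† c†
  simp only [DaggerCategory.dag_dag] at h3
  calc madd hprod f g ≫ c
      = (pr hprod f g ≫ (pr hprod (𝟙 W) (𝟙 W))†) ≫ c := rfl
  _ = pr hprod f g ≫ ((pr hprod (𝟙 W) (𝟙 W))† ≫ c) := by simp only [Category.assoc]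
  _ = pr hprod f g ≫ (pr hprod c† c†)† := by rw [h2]
  _ = madd hprod (f ≫ c) (g ≫ c) := h3

include Z hZ in
private lemma laws (hpb : HasDaggerPullbacks C) {X : C} (t : X ⟶ X) :
    madd hprod (madd hprod t† (𝟙 X)) (𝟙 X) = 𝟙 X ∧
      madd hprod t (madd hprod t (𝟙 X)) = t := by
  have hA1p : (Pfst hprod X X)† ≫ (pr hprod t† (𝟙 X))† = t := by
    have h := congrArg (fun x => x†) (pr_fst hprod t† (𝟙 X))
    simp only [DaggerCategory.dag_comp, DaggerCategory.dag_dag] at h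
    exact h
  have hA1q : (Psnd hprod X X)† ≫ (pr hprod t† (𝟙 X))† = 𝟙 X := by
    have h := congrArg (fun x => x†) (pr_snd hprod t† (𝟙 X))
    simp only [DaggerCategory.dag_comp, DaggerCategory.dag_dag,
      DaggerCategory.dag_id] at h
    exact h
  have hDdp : (Pfst hprod X X)† ≫ (pr hprod (𝟙 X) (𝟙 X))† = 𝟙 X := by
    have h := congrArg (fun x => x†) (pr_fst hprod (𝟙 X) (𝟙 X))
    simp only [DaggerCategory.dag_comp, DaggerCategory.dag_id] at h
    exact h
  have hDdq : (Psnd hprod X X)† ≫ (pr hprod (𝟙 X) (𝟙 X))† = 𝟙 X := by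
    have h := congrArg (fun x => x†) (pr_snd hprod (𝟙 X) (𝟙 X))
    simp only [DaggerCategory.dag_comp, DaggerCategory.dag_id] at h
    exact h
  have hMp : pr hprod ((pr hprod t† (𝟙 X))†) ((pr hprod (𝟙 X) (𝟙 X))†) ≫ Pfst hprod X X = (pr hprod t† (𝟙 X))† := pr_fst hprod _ _
  have hMq : pr hprod ((pr hprod t† (𝟙 X))†) ((pr hprod (𝟙 X) (𝟙 X))†) ≫ Psnd hprod X X = (pr hprod (𝟙 X) (𝟙 X))† := pr_snd hprod _ _
  have hrow1 : (Pfst hprod X X)† ≫ pr hprod ((pr hprod t† (𝟙 X))†) ((pr hprod (𝟙 X) (𝟙 X))†) = pr hprod t (𝟙 X) := by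
    apply pr_eq
    · calc ((Pfst hprod X X)† ≫ pr hprod ((pr hprod t† (𝟙 X))†) ((pr hprod (𝟙 X) (𝟙 X))†)) ≫ Pfst hprod X X = (Pfst hprod X X)† ≫ (pr hprod ((pr hprod t† (𝟙 X))†) ((pr hprod (𝟙 X) (𝟙 X))†) ≫ Pfst hprod X X) := by simp only [Category.assoc]
      _ = (Pfst hprod X X)† ≫ (pr hprod t† (𝟙 X))† := by rw [hMp]
      _ = t := hA1p
    · calc ((Pfst hprod X X)† ≫ pr hprod ((pr hprod t† (𝟙 X))†) ((pr hprod (𝟙 X) (𝟙 X))†)) ≫ Psnd hprod X X = (Pfst hprod X X)† ≫ (pr hprod ((pr hprod t† (𝟙 X))†) ((pr hprod (𝟙 X) (𝟙 X))†) ≫ Psnd hprod X X) := by simp only [Category.assoc]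
      _ = (Pfst hprod X X)† ≫ (pr hprod (𝟙 X) (𝟙 X))† := by rw [hMq]
      _ = 𝟙 X := hDdp
  have hrow2 : (Psnd hprod X X)† ≫ pr hprod ((pr hprod t† (𝟙 X))†) ((pr hprod (𝟙 X) (𝟙 X))†) = pr hprod (𝟙 X) (𝟙 X) := by
    apply pr_eq
    · calc ((Psnd hprod X X)† ≫ pr hprod ((pr hprod t† (𝟙 X))†) ((pr hprod (𝟙 X) (𝟙 X))†)) ≫ Pfst hprod X X = (Psnd hprod X X)† ≫ (pr hprod ((pr hprod t† (𝟙 X))†) ((pr hprod (𝟙 X) (𝟙 X))†) ≫ Pfst hprod X X) := by simp only [Category.assoc]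
      _ = (Psnd hprod X X)† ≫ (pr hprod t† (𝟙 X))† := by rw [hMp]
      _ = 𝟙 X := hA1q
    · calc ((Psnd hprod X X)† ≫ pr hprod ((pr hprod t† (𝟙 X))†) ((pr hprod (𝟙 X) (𝟙 X))†)) ≫ Psnd hprod X X = (Psnd hprod X X)† ≫ (pr hprod ((pr hprod t† (𝟙 X))†) ((pr hprod (𝟙 X) (𝟙 X))†) ≫ Psnd hprod X X) := by simp only [Category.assoc]
      _ = (Psnd hprod X X)† ≫ (pr hprod (𝟙 X) (𝟙 X))† := by rw [hMq]
      _ = 𝟙 X := hDdq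
  have hMdp : (pr hprod ((pr hprod t† (𝟙 X))†) ((pr hprod (𝟙 X) (𝟙 X))†))† ≫ Pfst hprod X X = (pr hprod t (𝟙 X))† := by
    have h := congrArg (fun x => x†) hrow1
    simp only [DaggerCategory.dag_comp, DaggerCategory.dag_dag] at h
    exact h
  have hMdq : (pr hprod ((pr hprod t† (𝟙 X))†) ((pr hprod (𝟙 X) (𝟙 X))†))† ≫ Psnd hprod X X = (pr hprod (𝟙 X) (𝟙 X))† := by
    have h := congrArg (fun x => x†) hrow2
    simp only [DaggerCategory.dag_comp, DaggerCategory.dag_dag] at h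
    exact h
  have hT1 : pr hprod ((pr hprod t† (𝟙 X))†) ((pr hprod (𝟙 X) (𝟙 X))†) ≫ (pr hprod ((pr hprod t† (𝟙 X))†) ((pr hprod (𝟙 X) (𝟙 X))†))† ≫ pr hprod ((pr hprod t† (𝟙 X))†) ((pr hprod (𝟙 X) (𝟙 X))†) = pr hprod ((pr hprod t† (𝟙 X))†) ((pr hprod (𝟙 X) (𝟙 X))†) := pi_all hpb _
  have hDiso : pr hprod (𝟙 X) (𝟙 X) ≫ (pr hprod (𝟙 X) (𝟙 X))† = 𝟙 X :=
    iso_of_split (pi_all hpb _) (pr_fst hprod (𝟙 X) (𝟙 X))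
  have ipDR : pr hprod (𝟙 X) (𝟙 X) ≫ (pr hprod t (𝟙 X))† = madd hprod t† (𝟙 X) := by
    have h := ip hprod Z hZ (𝟙 X) (𝟙 X) t (𝟙 X)
    simpa only [DaggerCategory.dag_id, Category.id_comp] using h
  have ipRR : pr hprod t (𝟙 X) ≫ (pr hprod t (𝟙 X))† = madd hprod (t ≫ t†) (𝟙 X) := by
    have h := ip hprod Z hZ t (𝟙 X) t (𝟙 X)
    simpa only [DaggerCategory.dag_id, Category.id_comp] using h
  have hS2 : pr hprod (𝟙 X) (𝟙 X) ≫ (pr hprod ((pr hprod t† (𝟙 X))†) ((pr hprod (𝟙 X) (𝟙 X))†))† = pr hprod (madd hprod t† (𝟙 X)) (𝟙 X) := by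
    apply pr_eq
    · calc (pr hprod (𝟙 X) (𝟙 X) ≫ (pr hprod ((pr hprod t† (𝟙 X))†) ((pr hprod (𝟙 X) (𝟙 X))†))†) ≫ Pfst hprod X X = pr hprod (𝟙 X) (𝟙 X) ≫ ((pr hprod ((pr hprod t† (𝟙 X))†) ((pr hprod (𝟙 X) (𝟙 X))†))† ≫ Pfst hprod X X) := by simp only [Category.assoc]
      _ = pr hprod (𝟙 X) (𝟙 X) ≫ (pr hprod t (𝟙 X))† := by rw [hMdp]
      _ = madd hprod t† (𝟙 X) := ipDR
    · calc (pr hprod (𝟙 X) (𝟙 X) ≫ (pr hprod ((pr hprod t† (𝟙 X))†) ((pr hprod (𝟙 X) (𝟙 X))†))†) ≫ Psnd hprod X X = pr hprod (𝟙 X) (𝟙 X) ≫ ((pr hprod ((pr hprod t† (𝟙 X))†) ((pr hprod (𝟙 X) (𝟙 X))†))† ≫ Psnd hprod X X) := by simp only [Category.assoc]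
      _ = pr hprod (𝟙 X) (𝟙 X) ≫ (pr hprod (𝟙 X) (𝟙 X))† := by rw [hMdq]
      _ = 𝟙 X := hDiso
  have hS1 : pr hprod t (𝟙 X) ≫ (pr hprod ((pr hprod t† (𝟙 X))†) ((pr hprod (𝟙 X) (𝟙 X))†))† =
      pr hprod (madd hprod (t ≫ t†) (𝟙 X)) (madd hprod t (𝟙 X)) := by
    apply pr_eq
    · calc (pr hprod t (𝟙 X) ≫ (pr hprod ((pr hprod t† (𝟙 X))†) ((pr hprod (𝟙 X) (𝟙 X))†))†) ≫ Pfst hprod X X = pr hprod t (𝟙 X) ≫ ((pr hprod ((pr hprod t† (𝟙 X))†) ((pr hprod (𝟙 X) (𝟙 X))†))† ≫ Pfst hprod X X) := by simp only [Category.assoc]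
      _ = pr hprod t (𝟙 X) ≫ (pr hprod t (𝟙 X))† := by rw [hMdp]
      _ = madd hprod (t ≫ t†) (𝟙 X) := ipRR
    · calc (pr hprod t (𝟙 X) ≫ (pr hprod ((pr hprod t† (𝟙 X))†) ((pr hprod (𝟙 X) (𝟙 X))†))†) ≫ Psnd hprod X X = pr hprod t (𝟙 X) ≫ ((pr hprod ((pr hprod t† (𝟙 X))†) ((pr hprod (𝟙 X) (𝟙 X))†))† ≫ Psnd hprod X X) := by simp only [Category.assoc]
      _ = pr hprod t (𝟙 X) ≫ (pr hprod (𝟙 X) (𝟙 X))† := by rw [hMdq]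
      _ = madd hprod t (𝟙 X) := rfl
  constructor
  · calc madd hprod (madd hprod t† (𝟙 X)) (𝟙 X)
        = pr hprod (madd hprod t† (𝟙 X)) (𝟙 X) ≫ (pr hprod (𝟙 X) (𝟙 X))† := rfl
    _ = (pr hprod (𝟙 X) (𝟙 X) ≫ (pr hprod ((pr hprod t† (𝟙 X))†) ((pr hprod (𝟙 X) (𝟙 X))†))†) ≫ (pr hprod (𝟙 X) (𝟙 X))† := by rw [hS2]
    _ = ((Psnd hprod X X)† ≫ pr hprod ((pr hprod t† (𝟙 X))†) ((pr hprod (𝟙 X) (𝟙 X))†)) ≫ ((pr hprod ((pr hprod t† (𝟙 X))†) ((pr hprod (𝟙 X) (𝟙 X))†))† ≫ (pr hprod ((pr hprod t† (𝟙 X))†) ((pr hprod (𝟙 X) (𝟙 X))†) ≫ Psnd hprod X X)) := by rw [hrow2, hMq]; simp only [Category.assoc]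
    _ = (Psnd hprod X X)† ≫ ((pr hprod ((pr hprod t† (𝟙 X))†) ((pr hprod (𝟙 X) (𝟙 X))†) ≫ (pr hprod ((pr hprod t† (𝟙 X))†) ((pr hprod (𝟙 X) (𝟙 X))†))† ≫ pr hprod ((pr hprod t† (𝟙 X))†) ((pr hprod (𝟙 X) (𝟙 X))†)) ≫ Psnd hprod X X) := by simp only [Category.assoc]
    _ = (Psnd hprod X X)† ≫ (pr hprod ((pr hprod t† (𝟙 X))†) ((pr hprod (𝟙 X) (𝟙 X))†) ≫ Psnd hprod X X) := by rw [hT1]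
    _ = (Psnd hprod X X)† ≫ (pr hprod (𝟙 X) (𝟙 X))† := by rw [hMq]
    _ = 𝟙 X := hDdq
  · have hpit : (t ≫ t†) ≫ t = t := by
      have h := pi_all hpb t
      simpa only [Category.assoc] using h
    have hS1t : madd hprod (t ≫ t†) (𝟙 X) ≫ t = t := by
      calc madd hprod (t ≫ t†) (𝟙 X) ≫ t
          = madd hprod ((t ≫ t†) ≫ t) (𝟙 X ≫ t) := madd_post hprod Z hZ _ _ t
      _ = madd hprod t t := by rw [hpit, Category.id_comp]
      _ = t := madd_idem hprod hpb t
    have hmat : pr hprod (madd hprod (t ≫ t†) (𝟙 X)) (madd hprod t (𝟙 X)) ≫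
        (pr hprod t† (𝟙 X))† = t := by
      calc pr hprod (madd hprod (t ≫ t†) (𝟙 X)) (madd hprod t (𝟙 X)) ≫
          (pr hprod t† (𝟙 X))†
          = (pr hprod t (𝟙 X) ≫ (pr hprod ((pr hprod t† (𝟙 X))†) ((pr hprod (𝟙 X) (𝟙 X))†))†) ≫ (pr hprod t† (𝟙 X))† := by rw [hS1]
      _ = ((Pfst hprod X X)† ≫ pr hprod ((pr hprod t† (𝟙 X))†) ((pr hprod (𝟙 X) (𝟙 X))†)) ≫ ((pr hprod ((pr hprod t† (𝟙 X))†) ((pr hprod (𝟙 X) (𝟙 X))†))† ≫ (pr hprod ((pr hprod t† (𝟙 X))†) ((pr hprod (𝟙 X) (𝟙 X))†) ≫ Pfst hprod X X)) := by rw [hrow1, hMp]; simp only [Category.assoc]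
      _ = (Pfst hprod X X)† ≫ ((pr hprod ((pr hprod t† (𝟙 X))†) ((pr hprod (𝟙 X) (𝟙 X))†) ≫ (pr hprod ((pr hprod t† (𝟙 X))†) ((pr hprod (𝟙 X) (𝟙 X))†))† ≫ pr hprod ((pr hprod t† (𝟙 X))†) ((pr hprod (𝟙 X) (𝟙 X))†)) ≫ Pfst hprod X X) := by simp only [Category.assoc]
      _ = (Pfst hprod X X)† ≫ (pr hprod ((pr hprod t† (𝟙 X))†) ((pr hprod (𝟙 X) (𝟙 X))†) ≫ Pfst hprod X X) := by rw [hT1]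
      _ = (Pfst hprod X X)† ≫ (pr hprod t† (𝟙 X))† := by rw [hMp]
      _ = t := hA1p
    have hip := ip hprod Z hZ (madd hprod (t ≫ t†) (𝟙 X)) (madd hprod t (𝟙 X))
      t† (𝟙 X)
    simp only [DaggerCategory.dag_dag, DaggerCategory.dag_id,
      Category.comp_id] at hip
    have hfin : madd hprod (madd hprod (t ≫ t†) (𝟙 X) ≫ t)
        (madd hprod t (𝟙 X)) = t := hip.symm.trans hmat
    rw [hS1t] at hfin
    exact hfin

include hprod Z hZ in
private lemma end_id (hpb : HasDaggerPullbacks C) {X : C} (t : X ⟶ X) : t = 𝟙 X := by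
  have hB : ∀ s : X ⟶ X, madd hprod (madd hprod s (𝟙 X)) (𝟙 X) = 𝟙 X := by
    intro s
    have h := (laws hprod Z hZ hpb s†).1
    simpa only [DaggerCategory.dag_dag] using h
  have h2 := (laws hprod Z hZ hpb (madd hprod t (𝟙 X))).2
  rw [hB t] at h2
  have hs : madd hprod t (𝟙 X) = 𝟙 X := h2.symm.trans (hB t)
  have h3 := (laws hprod Z hZ hpb t).2
  rw [hs] at h3
  rw [hs] at h3
  exact h3.symm

end AuxIndiscrete

/-- A dagger category with dagger equalizers, dagger pullbacks and binary
dagger products is indiscrete: every hom-set contains exactly one morphism. -/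
theorem indiscrete_of_daggerEqualizers_daggerPullbacks_binaryDaggerProducts
    (C : Type u) [Category.{v} C] [DaggerCategory C]
    (heq : HasDaggerEqualizers C) (hpb : HasDaggerPullbacks C)
    (hprod : ∀ A B : C, ∃ (P : C) (p : P ⟶ A) (q : P ⟶ B), IsBinaryDaggerProduct p q) :
    ∀ A B : C, Nonempty (A ⟶ B) ∧ Subsingleton (A ⟶ B) := by
  intro A B
  obtain ⟨Z, hZ⟩ := exists_zero hprod heq A
  obtain ⟨PAB, pab, qab, -⟩ := hprod A B
  refine ⟨⟨pab† ≫ qab⟩, ⟨fun f g => ?_⟩⟩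
  have h1 : f ≫ g† = 𝟙 A := end_id hprod Z hZ hpb (f ≫ g†)
  have h2 : g† ≫ g = 𝟙 B := end_id hprod Z hZ hpb (g† ≫ g)
  calc f = f ≫ 𝟙 B := by rw [Category.comp_id]
  _ = f ≫ (g† ≫ g) := by rw [h2]
  _ = (f ≫ g†) ≫ g := by rw [Category.assoc]
  _ = 𝟙 A ≫ g := by rw [h1]
  _ = g := by rw [Category.id_comp]
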